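/- Let Ω be a traceless 2×2 matrix with entries in ℂ(X) such that q·Ω has polynomial entries of degree at most 3, and suppose: Res_0(Ω)·(0,1)ᵀ = ν_0·(0,1)ᵀ, Res_1(Ω)·(1,1)ᵀ = ν_1·(1,1)ᵀ, Res_λ(Ω)·(0,1)ᵀ = ν_λ·(0,1)ᵀ, Res_t(Ω)·(0,1)ᵀ = ν_t·(0,1)ᵀ, and Res_∞(Ω)·(1,0)ᵀ = −ν_∞·(1,0)ᵀ. Then there exist unique a1, a2 ∈ ℂ such that Ω = Ω0 + a1·Θ1 + a2·Θ2; conversely, for every a1, a2 ∈ ℂ the matrix Ω0 + a1·Θ1 + a2·Θ2 satisfies all of the above residue conditions. (This identifies the space of traceless logarithmic connections d + Ω·dx on the trivial rank-two bundle over P¹ with poles on 0+1+λ+t+∞, prescribed residue eigenvalues ν_p, and prescribed parabolic eigendirections l_0 = l_λ = l_t = ℂ·(0,1), l_1 = ℂ·(1,1), l_∞ = ℂ·(1,0), with a 2-dimensional affine space.) -/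

import Mathlib

noncomputable section

open Polynomial

abbrev K : Type := RatFunc ℂ

def Xr : K := RatFunc.X

def Cc (a : ℂ) : K := RatFunc.C a

/-- q = X(X-1)(X-λ)(X-t) -/
def q (lm tm : ℂ) : Polynomial ℂ :=
  Polynomial.X * (Polynomial.X - Polynomial.C 1) * (Polynomial.X - Polynomial.C lm) *
    (Polynomial.X - Polynomial.C tm)

def toK : Polynomial ℂ →+* K := algebraMap (Polynomial ℂ) K

def IsReg (lm tm : ℂ) (r : K) : Prop :=
  ∃ p : Polynomial ℂ, p.degree ≤ 3 ∧ toK (q lm tm) * r = toK p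

def higgsMat (a b c : K) : Matrix (Fin 2) (Fin 2) K := !![a, b; c, -a]

def IsRatHiggs (lm tm : ℂ) (a b c : K) : Prop :=
  IsReg lm tm a ∧ IsReg lm tm b ∧ IsReg lm tm c

def evalAt (p : ℂ) (r : K) : ℂ := RatFunc.eval (RingHom.id ℂ) p r

def resFin (p : ℂ) (M : Matrix (Fin 2) (Fin 2) K) : Matrix (Fin 2) (Fin 2) ℂ :=
  Matrix.of fun i j => evalAt p ((Xr - Cc p) * M i j)

def coeff3 (lm tm : ℂ) (r : K) : ℂ := ((toK (q lm tm) * r).num).coeff 3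

def resInf (lm tm : ℂ) (M : Matrix (Fin 2) (Fin 2) K) : Matrix (Fin 2) (Fin 2) ℂ :=
  -(Matrix.of fun i j => coeff3 lm tm (M i j))

def line (a b : ℂ) : Submodule ℂ (Fin 2 → ℂ) := Submodule.span ℂ {![a, b]}

def NilOn (R : Matrix (Fin 2) (Fin 2) ℂ) (L : Submodule ℂ (Fin 2 → ℂ)) : Prop :=
  (∀ v ∈ L, R.mulVec v = 0) ∧ (∀ v, R.mulVec v ∈ L)

def IsParabolic (lm tm : ℂ) (M : Matrix (Fin 2) (Fin 2) K)
    (l0 l1 ll lt li : Submodule ℂ (Fin 2 → ℂ)) : Prop :=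
  NilOn (resFin 0 M) l0 ∧ NilOn (resFin 1 M) l1 ∧ NilOn (resFin lm M) ll ∧
  NilOn (resFin tm M) lt ∧ NilOn (resInf lm tm M) li

/-- a/(X - p) -/
def frac (a p : ℂ) : K := Cc a / (Xr - Cc p)

def α1 (lm u : ℂ) : K := frac u lm - frac u 1
def β1 (lm u : ℂ) : K := frac u 1 - frac 1 lm + frac (1 - u) 0
def γ1 (lm u : ℂ) : K := frac (u ^ 2) lm - frac u 1
def θ1 (lm u : ℂ) : Matrix (Fin 2) (Fin 2) K := higgsMat (α1 lm u) (β1 lm u) (γ1 lm u)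

def α2 (tm v : ℂ) : K := frac v tm - frac v 1
def β2 (tm v : ℂ) : K := frac v 1 - frac 1 tm + frac (1 - v) 0
def γ2 (tm v : ℂ) : K := frac (v ^ 2) tm - frac v 1
def θ2 (tm v : ℂ) : Matrix (Fin 2) (Fin 2) K := higgsMat (α2 tm v) (β2 tm v) (γ2 tm v)

/-- Θ1 : zero diagonal, zero upper-right entry, lower-left entry 1/X − 1/(X−λ). -/
def Θ1 (lm : ℂ) : Matrix (Fin 2) (Fin 2) K := higgsMat 0 0 (Xr⁻¹ - (Xr - Cc lm)⁻¹)

/-- Θ2 : zero diagonal, zero upper-right entry, lower-left entry 1/X − 1/(X−t). -/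
def Θ2 (tm : ℂ) : Matrix (Fin 2) (Fin 2) K := higgsMat 0 0 (Xr⁻¹ - (Xr - Cc tm)⁻¹)

/-- ρ = −(ν₀ + ν₁ + ν_λ + ν_t + ν_∞). -/
def ρv (ν0 ν1 νl νt νi : ℂ) : ℂ := -(ν0 + ν1 + νl + νt + νi)

/-- Ω0 = A₀/X + A₁/(X−1) + A_λ/(X−λ) + A_t/(X−t), written entrywise, where
A₀ = ((−ν₀,0),(ρ,ν₀)), A₁ = ((−ν₁−ρ, 2ν₁+ρ),(−ρ, ν₁+ρ)), A_λ = ((−ν_λ,0),(0,ν_λ)),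
A_t = ((−ν_t,0),(0,ν_t)). -/
def Ω0 (lm tm ν0 ν1 νl νt νi : ℂ) : Matrix (Fin 2) (Fin 2) K :=
  !![frac (-ν0) 0 + frac (-ν1 - ρv ν0 ν1 νl νt νi) 1 + frac (-νl) lm + frac (-νt) tm,
       frac (2 * ν1 + ρv ν0 ν1 νl νt νi) 1;
     frac (ρv ν0 ν1 νl νt νi) 0 + frac (-(ρv ν0 ν1 νl νt νi)) 1,
       frac ν0 0 + frac (ν1 + ρv ν0 ν1 νl νt νi) 1 + frac νl lm + frac νt tm]

/-- The residue conditions: ν_p is an eigenvalue of Res_p with the prescribed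
parabolic eigendirection (l₀ = l_λ = l_t = ℂ(0,1), l₁ = ℂ(1,1), l_∞ = ℂ(1,0)). -/
def ResCond (lm tm ν0 ν1 νl νt νi : ℂ) (Ω : Matrix (Fin 2) (Fin 2) K) : Prop :=
  (resFin 0 Ω).mulVec ![0, 1] = ν0 • ![0, 1] ∧
  (resFin 1 Ω).mulVec ![1, 1] = ν1 • ![1, 1] ∧
  (resFin lm Ω).mulVec ![0, 1] = νl • ![0, 1] ∧
  (resFin tm Ω).mulVec ![0, 1] = νt • ![0, 1] ∧
  (resInf lm tm Ω).mulVec ![1, 0] = (-νi) • ![1, 0]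

namespace S16

lemma toK_inj : Function.Injective toK := RatFunc.algebraMap_injective ℂ

lemma toK_ne (P : Polynomial ℂ) (h : P ≠ 0) : toK P ≠ 0 := by
  simpa [toK] using RatFunc.algebraMap_ne_zero h

lemma Xr_sub_Cc (p : ℂ) : Xr - Cc p = toK (Polynomial.X - Polynomial.C p) := by
  simp [Xr, Cc, toK, RatFunc.algebraMap_X, RatFunc.algebraMap_C]

lemma evalAt_toK (P : Polynomial ℂ) (p₀ : ℂ) : evalAt p₀ (toK P) = P.eval p₀ := by
  simp [evalAt, toK]

lemma evalAt_div (A B : Polynomial ℂ) (p₀ : ℂ) (hB : B.eval p₀ ≠ 0) :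
    evalAt p₀ (toK A / toK B) = A.eval p₀ / B.eval p₀ := by
  have hB0 : B ≠ 0 := fun h => hB (by simp [h])
  have hBK : toK B ≠ 0 := toK_ne B hB0
  have hdvd : (toK A / toK B).denom ∣ B := (RatFunc.denom_dvd hB0).mpr ⟨A, rfl⟩
  have hden : Polynomial.eval₂ (RingHom.id ℂ) p₀ ((toK A / toK B).denom) ≠ 0 := by
    obtain ⟨s, hs⟩ := hdvd
    intro h
    apply hB
    rw [hs]
    simpa using mul_eq_zero_of_left (by simpa using h) (s.eval p₀)
  have hden2 : Polynomial.eval₂ (RingHom.id ℂ) p₀ ((toK B).denom) ≠ 0 := by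
    simp [toK, RatFunc.denom_algebraMap]
  have h2 := RatFunc.eval_mul (f := RingHom.id ℂ) (a := p₀) hden hden2
  rw [div_mul_cancel₀ _ hBK] at h2
  have hA : RatFunc.eval (RingHom.id ℂ) p₀ (toK A) = A.eval p₀ := evalAt_toK A p₀
  have hBe : RatFunc.eval (RingHom.id ℂ) p₀ (toK B) = B.eval p₀ := evalAt_toK B p₀
  rw [hA, hBe] at h2
  field_simp [evalAt, h2]
  exact h2.symm

/-- residue formula -/
lemma res_formula (lm tm p₀ : ℂ) (qt : Polynomial ℂ)
    (hq : q lm tm = (Polynomial.X - Polynomial.C p₀) * qt)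
    (hqt : qt.eval p₀ ≠ 0) (r : K) (P : Polynomial ℂ) (hr : toK (q lm tm) * r = toK P) :
    evalAt p₀ ((Xr - Cc p₀) * r) = P.eval p₀ / qt.eval p₀ := by
  have hqt0 : qt ≠ 0 := fun h => hqt (by simp [h])
  have h1 : (Xr - Cc p₀) * r = toK P / toK qt := by
    rw [Xr_sub_Cc, eq_div_iff (toK_ne _ hqt0)]
    have h : toK (Polynomial.X - Polynomial.C p₀) * r * toK qt = toK (q lm tm) * r := by
      rw [hq, map_mul]; ring
    rw [h, hr]
  rw [h1, evalAt_div _ _ _ hqt]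

lemma coeff3_eq (lm tm : ℂ) (r : K) (P : Polynomial ℂ) (hr : toK (q lm tm) * r = toK P) :
    coeff3 lm tm r = P.coeff 3 := by
  unfold coeff3
  rw [hr]
  show (RatFunc.num (algebraMap _ _ P)).coeff 3 = P.coeff 3
  rw [RatFunc.num_algebraMap]

def qq (a b c : ℂ) : Polynomial ℂ :=
  (Polynomial.X - Polynomial.C a) * (Polynomial.X - Polynomial.C b) *
    (Polynomial.X - Polynomial.C c)

lemma qq_eval (a b c p : ℂ) : (qq a b c).eval p = (p - a) * (p - b) * (p - c) := by
  simp [qq]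

lemma qq_monic (a b c : ℂ) : (qq a b c).Monic :=
  ((monic_X_sub_C a).mul (monic_X_sub_C b)).mul (monic_X_sub_C c)

lemma qq_natDegree (a b c : ℂ) : (qq a b c).natDegree = 3 := by
  unfold qq
  rw [((monic_X_sub_C a).mul (monic_X_sub_C b)).natDegree_mul (monic_X_sub_C c),
    (monic_X_sub_C a).natDegree_mul (monic_X_sub_C b), natDegree_X_sub_C]
  simp [natDegree_X_sub_C]

lemma qq_coeff3 (a b c : ℂ) : (qq a b c).coeff 3 = 1 := by
  have h := (qq_monic a b c).coeff_natDegree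
  rwa [qq_natDegree] at h

lemma qq_degree_le (a b c : ℂ) : (qq a b c).degree ≤ 3 := by
  rw [degree_eq_natDegree (qq_monic a b c).ne_zero, qq_natDegree]
  exact le_refl _

/-- the F-form rational function and its polynomial numerator -/
def Fr (lm tm c0 c1 cl ct : ℂ) : K := frac c0 0 + frac c1 1 + frac cl lm + frac ct tm

def PF (lm tm c0 c1 cl ct : ℂ) : Polynomial ℂ :=
  Polynomial.C c0 * qq 1 lm tm + Polynomial.C c1 * qq 0 lm tm +
    Polynomial.C cl * qq 0 1 tm + Polynomial.C ct * qq 0 1 lm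

lemma frac_eq (a p : ℂ) : frac a p = toK (Polynomial.C a) / toK (Polynomial.X - Polynomial.C p) := by
  rw [frac, Xr_sub_Cc]
  simp [Cc, toK, RatFunc.algebraMap_C]

lemma F_spec (lm tm c0 c1 cl ct : ℂ) :
    toK (q lm tm) * Fr lm tm c0 c1 cl ct = toK (PF lm tm c0 c1 cl ct) := by
  have hne : ∀ p : ℂ, toK (Polynomial.X - Polynomial.C p) ≠ 0 :=
    fun p => toK_ne _ (X_sub_C_ne_zero p)
  have h0 : toK Polynomial.X ≠ 0 := by
    simpa using hne 0
  have h1 : toK Polynomial.X - 1 ≠ 0 := by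
    have := hne 1; rw [map_sub] at this; simpa using this
  have hl : toK Polynomial.X - toK (Polynomial.C lm) ≠ 0 := by
    have := hne lm; rw [map_sub] at this; simpa using this
  have ht : toK Polynomial.X - toK (Polynomial.C tm) ≠ 0 := by
    have := hne tm; rw [map_sub] at this; simpa using this
  unfold Fr
  rw [frac_eq, frac_eq, frac_eq, frac_eq]
  unfold PF q qq
  simp only [map_mul, map_add, map_sub, Polynomial.C_0, Polynomial.C_1, map_one, map_zero,
    sub_zero]
  field_simp

lemma PF_degree_le (lm tm c0 c1 cl ct : ℂ) : (PF lm tm c0 c1 cl ct).degree ≤ 3 := by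
  unfold PF
  refine le_trans (degree_add_le _ _) (max_le (le_trans (degree_add_le _ _) (max_le
    (le_trans (degree_add_le _ _) (max_le ?_ ?_)) ?_)) ?_) <;>
  · refine le_trans (degree_mul_le _ _) ?_
    refine le_trans (add_le_add degree_C_le (qq_degree_le _ _ _)) ?_
    simp

lemma PF_coeff3 (lm tm c0 c1 cl ct : ℂ) :
    (PF lm tm c0 c1 cl ct).coeff 3 = c0 + c1 + cl + ct := by
  unfold PF
  simp [coeff_C_mul, qq_coeff3]

lemma PF_eval0 (lm tm c0 c1 cl ct : ℂ) :
    (PF lm tm c0 c1 cl ct).eval 0 = c0 * ((0-1)*(0-lm)*(0-tm)) := by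
  unfold PF; simp [qq_eval]

lemma PF_eval1 (lm tm c0 c1 cl ct : ℂ) :
    (PF lm tm c0 c1 cl ct).eval 1 = c1 * ((1-0)*(1-lm)*(1-tm)) := by
  unfold PF; simp [qq_eval]

lemma PF_evall (lm tm c0 c1 cl ct : ℂ) :
    (PF lm tm c0 c1 cl ct).eval lm = cl * ((lm-0)*(lm-1)*(lm-tm)) := by
  unfold PF; simp [qq_eval]

lemma PF_evalt (lm tm c0 c1 cl ct : ℂ) :
    (PF lm tm c0 c1 cl ct).eval tm = ct * ((tm-0)*(tm-1)*(tm-lm)) := by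
  unfold PF; simp [qq_eval]

/-- the four factorizations of q -/
lemma q_fact0 (lm tm : ℂ) :
    q lm tm = (Polynomial.X - Polynomial.C 0) * qq 1 lm tm := by
  unfold q qq; simp only [Polynomial.C_0, Polynomial.C_1, sub_zero]; ring
lemma q_fact1 (lm tm : ℂ) :
    q lm tm = (Polynomial.X - Polynomial.C 1) * qq 0 lm tm := by
  unfold q qq; simp only [Polynomial.C_0, Polynomial.C_1, sub_zero]; ring
lemma q_factl (lm tm : ℂ) :
    q lm tm = (Polynomial.X - Polynomial.C lm) * qq 0 1 tm := by
  unfold q qq; simp only [Polynomial.C_0, Polynomial.C_1, sub_zero]; ring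
lemma q_factt (lm tm : ℂ) :
    q lm tm = (Polynomial.X - Polynomial.C tm) * qq 0 1 lm := by
  unfold q qq; simp only [Polynomial.C_0, Polynomial.C_1, sub_zero]; ring

section Res
variable {lm tm : ℂ} (hl0 : lm ≠ 0) (hl1 : lm ≠ 1) (ht0 : tm ≠ 0) (ht1 : tm ≠ 1) (hlt : lm ≠ tm)

include hl0 ht0 in
lemma E0_ne : ((0:ℂ)-1)*(0-lm)*(0-tm) ≠ 0 :=
  mul_ne_zero (mul_ne_zero (by norm_num) (sub_ne_zero.mpr (Ne.symm hl0)))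
    (sub_ne_zero.mpr (Ne.symm ht0))
include hl1 ht1 in
lemma E1_ne : ((1:ℂ)-0)*(1-lm)*(1-tm) ≠ 0 :=
  mul_ne_zero (mul_ne_zero (by norm_num) (sub_ne_zero.mpr (Ne.symm hl1)))
    (sub_ne_zero.mpr (Ne.symm ht1))
include hl0 hl1 hlt in
lemma El_ne : (lm-0)*(lm-1)*(lm-tm) ≠ 0 :=
  mul_ne_zero (mul_ne_zero (sub_ne_zero.mpr (by simpa using hl0)) (sub_ne_zero.mpr hl1))
    (sub_ne_zero.mpr hlt)
include ht0 ht1 hlt in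
lemma Et_ne : (tm-0)*(tm-1)*(tm-lm) ≠ 0 :=
  mul_ne_zero (mul_ne_zero (sub_ne_zero.mpr (by simpa using ht0)) (sub_ne_zero.mpr ht1))
    (sub_ne_zero.mpr (Ne.symm hlt))

include hl0 ht0 in
lemma res0_eq (r : K) (P : Polynomial ℂ) (hr : toK (q lm tm) * r = toK P) :
    evalAt 0 ((Xr - Cc 0) * r) = P.eval 0 / (((0:ℂ)-1)*(0-lm)*(0-tm)) := by
  rw [res_formula lm tm 0 (qq 1 lm tm) (q_fact0 lm tm)
    (by rw [qq_eval]; exact E0_ne hl0 ht0) r P hr, qq_eval]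

include hl1 ht1 in
lemma res1_eq (r : K) (P : Polynomial ℂ) (hr : toK (q lm tm) * r = toK P) :
    evalAt 1 ((Xr - Cc 1) * r) = P.eval 1 / (((1:ℂ)-0)*(1-lm)*(1-tm)) := by
  rw [res_formula lm tm 1 (qq 0 lm tm) (q_fact1 lm tm)
    (by rw [qq_eval]; exact E1_ne hl1 ht1) r P hr, qq_eval]

include hl0 hl1 hlt in
lemma resl_eq (r : K) (P : Polynomial ℂ) (hr : toK (q lm tm) * r = toK P) :
    evalAt lm ((Xr - Cc lm) * r) = P.eval lm / ((lm-0)*(lm-1)*(lm-tm)) := by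
  rw [res_formula lm tm lm (qq 0 1 tm) (q_factl lm tm)
    (by rw [qq_eval]; exact El_ne hl0 hl1 hlt) r P hr, qq_eval]

include ht0 ht1 hlt in
lemma rest_eq (r : K) (P : Polynomial ℂ) (hr : toK (q lm tm) * r = toK P) :
    evalAt tm ((Xr - Cc tm) * r) = P.eval tm / ((tm-0)*(tm-1)*(tm-lm)) := by
  rw [res_formula lm tm tm (qq 0 1 lm) (q_factt lm tm)
    (by rw [qq_eval]; exact Et_ne ht0 ht1 hlt) r P hr, qq_eval]

end Res

/-- vanishing lemma, 4 roots -/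
lemma vanish4 {lm tm : ℂ} (hl0 : lm ≠ 0) (hl1 : lm ≠ 1) (ht0 : tm ≠ 0) (ht1 : tm ≠ 1)
    (hlt : lm ≠ tm) (P : Polynomial ℂ) (hdeg : P.degree ≤ 3)
    (h0 : P.eval 0 = 0) (h1 : P.eval 1 = 0) (hl : P.eval lm = 0) (ht : P.eval tm = 0) :
    P = 0 := by
  apply eq_zero_of_natDegree_lt_card_of_eval_eq_zero' P {0, 1, lm, tm}
  · intro i hi
    simp only [Finset.mem_insert, Finset.mem_singleton] at hi
    rcases hi with rfl | rfl | rfl | rfl <;> assumption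
  · have hcard : ({0, 1, lm, tm} : Finset ℂ).card = 4 := by
      rw [Finset.card_insert_of_notMem (by simp [eq_comm, hl0, ht0, (one_ne_zero : (1:ℂ) ≠ 0)]),
        Finset.card_insert_of_notMem (by simp [eq_comm, hl1, ht1]),
        Finset.card_insert_of_notMem (by simp [hlt]), Finset.card_singleton]
    have hnd : P.natDegree ≤ 3 := natDegree_le_iff_degree_le.mpr hdeg
    rw [hcard]
    omega
    
/-- vanishing lemma, 3 roots + top coefficient -/
lemma vanish3 (x1 x2 x3 : ℂ) (h12 : x1 ≠ x2) (h13 : x1 ≠ x3) (h23 : x2 ≠ x3)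
    (P : Polynomial ℂ) (hdeg : P.degree ≤ 3) (hc : P.coeff 3 = 0)
    (h1 : P.eval x1 = 0) (h2 : P.eval x2 = 0) (h3 : P.eval x3 = 0) :
    P = 0 := by
  by_cases hP : P = 0
  · exact hP
  have hnd : P.natDegree ≤ 3 := natDegree_le_iff_degree_le.mpr hdeg
  have hnd2 : P.natDegree ≤ 2 := by
    rcases lt_or_eq_of_le hnd with h | h
    · omega
    · exfalso
      have hlc : P.leadingCoeff ≠ 0 := mt leadingCoeff_eq_zero.mp hP
      rw [leadingCoeff, h] at hlc
      exact hlc hc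
  apply eq_zero_of_natDegree_lt_card_of_eval_eq_zero' P {x1, x2, x3}
  · intro i hi
    simp only [Finset.mem_insert, Finset.mem_singleton] at hi
    rcases hi with rfl | rfl | rfl <;> assumption
  · have hcard : ({x1, x2, x3} : Finset ℂ).card = 3 := by
      rw [Finset.card_insert_of_notMem (by simp [h12, h13]),
        Finset.card_insert_of_notMem (by simp [h23]), Finset.card_singleton]
    rw [hcard]
    omega

end S16

namespace S16

lemma Cc_zero : Cc 0 = 0 := by simp [Cc]

lemma smul_K (a : ℂ) (x : K) : a • x = Cc a * x := by
  rw [Algebra.smul_def]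
  have : algebraMap ℂ K a = Cc a := by
    rw [IsScalarTower.algebraMap_apply ℂ (Polynomial ℂ) K, Polynomial.algebraMap_eq]
    simp [Cc, RatFunc.algebraMap_C, toK]
  rw [this]

lemma q_ne (lm tm : ℂ) : toK (q lm tm) ≠ 0 :=
  toK_ne _ (by
    rw [q_fact0]
    exact mul_ne_zero (X_sub_C_ne_zero 0) (qq_monic 1 lm tm).ne_zero)

lemma Xr_ne : Xr ≠ 0 := by
  rw [show Xr = Xr - Cc 0 by rw [Cc_zero, sub_zero], Xr_sub_Cc]
  exact toK_ne _ (X_sub_C_ne_zero 0)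

lemma Xr_sub_ne (p : ℂ) : Xr - Cc p ≠ 0 := by
  rw [Xr_sub_Cc]; exact toK_ne _ (X_sub_C_ne_zero p)

section FrRes
variable {lm tm : ℂ} (hl0 : lm ≠ 0) (hl1 : lm ≠ 1) (ht0 : tm ≠ 0) (ht1 : tm ≠ 1) (hlt : lm ≠ tm)
variable (c0 c1 cl ct : ℂ)

include hl0 ht0 in
lemma Fres0 : evalAt 0 ((Xr - Cc 0) * Fr lm tm c0 c1 cl ct) = c0 := by
  rw [res0_eq hl0 ht0 _ _ (F_spec lm tm c0 c1 cl ct), PF_eval0]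
  exact mul_div_cancel_right₀ c0 (E0_ne hl0 ht0)

include hl1 ht1 in
lemma Fres1 : evalAt 1 ((Xr - Cc 1) * Fr lm tm c0 c1 cl ct) = c1 := by
  rw [res1_eq hl1 ht1 _ _ (F_spec lm tm c0 c1 cl ct), PF_eval1]
  exact mul_div_cancel_right₀ c1 (E1_ne hl1 ht1)

include hl0 hl1 hlt in
lemma Fresl : evalAt lm ((Xr - Cc lm) * Fr lm tm c0 c1 cl ct) = cl := by
  rw [resl_eq hl0 hl1 hlt _ _ (F_spec lm tm c0 c1 cl ct), PF_evall]
  exact mul_div_cancel_right₀ cl (El_ne hl0 hl1 hlt)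

include ht0 ht1 hlt in
lemma Frest : evalAt tm ((Xr - Cc tm) * Fr lm tm c0 c1 cl ct) = ct := by
  rw [rest_eq ht0 ht1 hlt _ _ (F_spec lm tm c0 c1 cl ct), PF_evalt]
  exact mul_div_cancel_right₀ ct (Et_ne ht0 ht1 hlt)

lemma Frcoeff3 : coeff3 lm tm (Fr lm tm c0 c1 cl ct) = c0 + c1 + cl + ct := by
  rw [coeff3_eq lm tm _ _ (F_spec lm tm c0 c1 cl ct), PF_coeff3]

end FrRes

/-- entries of Ω0 + a1•Θ1 + a2•Θ2 in Fr form -/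
lemma Psi00 (lm tm ν0 ν1 νl νt νi a1 a2 : ℂ) :
    (Ω0 lm tm ν0 ν1 νl νt νi + a1 • Θ1 lm + a2 • Θ2 tm) 0 0
      = Fr lm tm (-ν0) (-ν1 - ρv ν0 ν1 νl νt νi) (-νl) (-νt) := by
  simp only [Ω0, Θ1, Θ2, higgsMat, Matrix.add_apply, Matrix.smul_apply,
    Matrix.cons_val', Matrix.cons_val_zero, Matrix.cons_val_one, Matrix.head_cons,
    Matrix.empty_val', Matrix.cons_val_fin_one, Matrix.head_fin_const, Matrix.of_apply]
  rw [smul_K, smul_K]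
  unfold Fr
  ring

lemma Psi01 (lm tm ν0 ν1 νl νt νi a1 a2 : ℂ) :
    (Ω0 lm tm ν0 ν1 νl νt νi + a1 • Θ1 lm + a2 • Θ2 tm) 0 1
      = Fr lm tm 0 (2 * ν1 + ρv ν0 ν1 νl νt νi) 0 0 := by
  simp only [Ω0, Θ1, Θ2, higgsMat, Matrix.add_apply, Matrix.smul_apply,
    Matrix.cons_val', Matrix.cons_val_zero, Matrix.cons_val_one, Matrix.head_cons,
    Matrix.empty_val', Matrix.cons_val_fin_one, Matrix.head_fin_const, Matrix.of_apply]
  rw [smul_K, smul_K]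
  unfold Fr frac
  rw [Cc_zero]
  simp only [zero_div, mul_zero, add_zero, zero_add]

lemma Psi10 (lm tm ν0 ν1 νl νt νi a1 a2 : ℂ) :
    (Ω0 lm tm ν0 ν1 νl νt νi + a1 • Θ1 lm + a2 • Θ2 tm) 1 0
      = Fr lm tm (ρv ν0 ν1 νl νt νi + a1 + a2) (-(ρv ν0 ν1 νl νt νi)) (-a1) (-a2) := by
  simp only [Ω0, Θ1, Θ2, higgsMat, Matrix.add_apply, Matrix.smul_apply,
    Matrix.cons_val', Matrix.cons_val_zero, Matrix.cons_val_one, Matrix.head_cons,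
    Matrix.empty_val', Matrix.cons_val_fin_one, Matrix.head_fin_const, Matrix.of_apply]
  rw [smul_K, smul_K]
  unfold Fr frac
  rw [Cc_zero, sub_zero]
  have h0 : Xr ≠ 0 := Xr_ne
  have hl : Xr - Cc lm ≠ 0 := Xr_sub_ne lm
  have ht : Xr - Cc tm ≠ 0 := Xr_sub_ne tm
  have h1 : Xr - Cc 1 ≠ 0 := Xr_sub_ne 1
  simp only [Cc, map_add, map_neg]
  field_simp
  ring

lemma Psi11 (lm tm ν0 ν1 νl νt νi a1 a2 : ℂ) :
    (Ω0 lm tm ν0 ν1 νl νt νi + a1 • Θ1 lm + a2 • Θ2 tm) 1 1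
      = Fr lm tm ν0 (ν1 + ρv ν0 ν1 νl νt νi) νl νt := by
  simp only [Ω0, Θ1, Θ2, higgsMat, Matrix.add_apply, Matrix.smul_apply,
    Matrix.cons_val', Matrix.cons_val_zero, Matrix.cons_val_one, Matrix.head_cons,
    Matrix.empty_val', Matrix.cons_val_fin_one, Matrix.head_fin_const, Matrix.of_apply]
  rw [smul_K, smul_K]
  unfold Fr
  ring

end S16

namespace S16

lemma resCond_Psi (lm tm : ℂ) (hl0 : lm ≠ 0) (hl1 : lm ≠ 1) (ht0 : tm ≠ 0) (ht1 : tm ≠ 1)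
    (hlt : lm ≠ tm) (ν0 ν1 νl νt νi a1 a2 : ℂ) :
    ResCond lm tm ν0 ν1 νl νt νi (Ω0 lm tm ν0 ν1 νl νt νi + a1 • Θ1 lm + a2 • Θ2 tm) := by
  have e00 := Psi00 lm tm ν0 ν1 νl νt νi a1 a2
  have e01 := Psi01 lm tm ν0 ν1 νl νt νi a1 a2
  have e10 := Psi10 lm tm ν0 ν1 νl νt νi a1 a2
  have e11 := Psi11 lm tm ν0 ν1 νl νt νi a1 a2
  refine ⟨?_, ?_, ?_, ?_, ?_⟩
  · funext i
    fin_cases i <;>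
      simp only [Matrix.mulVec, dotProduct, Fin.mk_zero, Fin.mk_one, Fin.isValue, Fin.sum_univ_two, resFin, Matrix.of_apply,
        Matrix.cons_val_zero, Matrix.cons_val_one, Matrix.head_cons, Pi.smul_apply,
        smul_eq_mul, mul_zero, mul_one, zero_add, add_zero, e00, e01, e10, e11]
    · rw [Fres0 hl0 ht0]
    · rw [Fres0 hl0 ht0]
  · funext i
    fin_cases i <;>
      simp only [Matrix.mulVec, dotProduct, Fin.mk_zero, Fin.mk_one, Fin.isValue, Fin.sum_univ_two, resFin, Matrix.of_apply,
        Matrix.cons_val_zero, Matrix.cons_val_one, Matrix.head_cons, Pi.smul_apply,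
        smul_eq_mul, mul_zero, mul_one, zero_add, add_zero, e00, e01, e10, e11]
    · rw [Fres1 hl1 ht1, Fres1 hl1 ht1]; ring
    · rw [Fres1 hl1 ht1, Fres1 hl1 ht1]; ring
  · funext i
    fin_cases i <;>
      simp only [Matrix.mulVec, dotProduct, Fin.mk_zero, Fin.mk_one, Fin.isValue, Fin.sum_univ_two, resFin, Matrix.of_apply,
        Matrix.cons_val_zero, Matrix.cons_val_one, Matrix.head_cons, Pi.smul_apply,
        smul_eq_mul, mul_zero, mul_one, zero_add, add_zero, e00, e01, e10, e11]
    · rw [Fresl hl0 hl1 hlt]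
    · rw [Fresl hl0 hl1 hlt]
  · funext i
    fin_cases i <;>
      simp only [Matrix.mulVec, dotProduct, Fin.mk_zero, Fin.mk_one, Fin.isValue, Fin.sum_univ_two, resFin, Matrix.of_apply,
        Matrix.cons_val_zero, Matrix.cons_val_one, Matrix.head_cons, Pi.smul_apply,
        smul_eq_mul, mul_zero, mul_one, zero_add, add_zero, e00, e01, e10, e11]
    · rw [Frest ht0 ht1 hlt]
    · rw [Frest ht0 ht1 hlt]
  · funext i
    fin_cases i <;>
      simp only [Matrix.mulVec, dotProduct, Fin.mk_zero, Fin.mk_one, Fin.isValue, Fin.sum_univ_two, resInf, Matrix.neg_apply,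
        Matrix.of_apply, Matrix.cons_val_zero, Matrix.cons_val_one, Matrix.head_cons,
        Pi.smul_apply, smul_eq_mul, mul_zero, mul_one, zero_add, add_zero, neg_zero,
        e00, e01, e10, e11]
    · rw [Frcoeff3]; simp only [ρv]; ring
    · rw [Frcoeff3]; simp only [ρv]; ring

end S16

open S16

/-- the space of traceless logarithmic connection matrices with prescribed
residue eigenvalues and parabolic eigendirections is the affine plane
Ω0 + ℂ·Θ1 + ℂ·Θ2. -/
theorem stmt16 (lm tm : ℂ) (hl0 : lm ≠ 0) (hl1 : lm ≠ 1) (ht0 : tm ≠ 0) (ht1 : tm ≠ 1)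
    (hlt : lm ≠ tm) (ν0 ν1 νl νt νi : ℂ) (Ω : Matrix (Fin 2) (Fin 2) K)
    (htr : Ω 1 1 = -Ω 0 0) (hreg : ∀ i j, IsReg lm tm (Ω i j))
    (hres : ResCond lm tm ν0 ν1 νl νt νi Ω) :
    (∃! a : ℂ × ℂ, Ω = Ω0 lm tm ν0 ν1 νl νt νi + a.1 • Θ1 lm + a.2 • Θ2 tm) ∧
    (∀ a1 a2 : ℂ, ResCond lm tm ν0 ν1 νl νt νi
      (Ω0 lm tm ν0 ν1 νl νt νi + a1 • Θ1 lm + a2 • Θ2 tm)) := by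
  obtain ⟨Pa, hPadeg, hPa⟩ := hreg 0 0
  obtain ⟨Pb, hPbdeg, hPb⟩ := hreg 0 1
  obtain ⟨Pc, hPcdeg, hPc⟩ := hreg 1 0
  have hPa' : toK (q lm tm) * Ω 1 1 = toK (-Pa) := by
    rw [htr, map_neg, ← hPa]; ring
  obtain ⟨h0, h1c, hlc, htc, hic⟩ := hres
  have c00 := congrFun h0 0
  have c01 := congrFun h0 1
  have c10 := congrFun h1c 0
  have c11 := congrFun h1c 1
  have cl0 := congrFun hlc 0
  have cl1 := congrFun hlc 1
  have cs0 := congrFun htc 0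
  have cs1 := congrFun htc 1
  have ci0 := congrFun hic 0
  have ci1 := congrFun hic 1
  simp only [Matrix.mulVec, dotProduct, Fin.mk_zero, Fin.mk_one, Fin.isValue,
    Fin.sum_univ_two, resFin, resInf, Matrix.neg_apply, Matrix.of_apply, Matrix.cons_val_zero,
    Matrix.cons_val_one, Matrix.head_cons, Pi.smul_apply, smul_eq_mul, mul_zero, mul_one,
    zero_add, add_zero, neg_zero] at c00 c01 c10 c11 cl0 cl1 cs0 cs1 ci0 ci1
  rw [res0_eq hl0 ht0 _ _ hPb] at c00
  rw [res0_eq hl0 ht0 _ _ hPa'] at c01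
  rw [res1_eq hl1 ht1 _ _ hPa, res1_eq hl1 ht1 _ _ hPb] at c10
  rw [res1_eq hl1 ht1 _ _ hPc, res1_eq hl1 ht1 _ _ hPa'] at c11
  rw [resl_eq hl0 hl1 hlt _ _ hPb] at cl0
  rw [resl_eq hl0 hl1 hlt _ _ hPa'] at cl1
  rw [rest_eq ht0 ht1 hlt _ _ hPb] at cs0
  rw [rest_eq ht0 ht1 hlt _ _ hPa'] at cs1
  rw [coeff3_eq lm tm _ _ hPa] at ci0
  rw [coeff3_eq lm tm _ _ hPc] at ci1
  simp only [Polynomial.eval_neg] at c01 c11 cl1 cs1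
  -- convert divisions into linear equations
  have hb0 : Pb.eval 0 = 0 :=
    (div_eq_zero_iff.mp c00).resolve_right (E0_ne hl0 ht0)
  have ha0 : Pa.eval 0 = -(ν0 * (((0:ℂ)-1)*(0-lm)*(0-tm))) := by
    rw [div_eq_iff (E0_ne hl0 ht0)] at c01; linear_combination -c01
  have hab1 : Pa.eval 1 + Pb.eval 1 = ν1 * (((1:ℂ)-0)*(1-lm)*(1-tm)) := by
    rw [← add_div, div_eq_iff (E1_ne hl1 ht1)] at c10; exact c10
  have hca1 : Pc.eval 1 - Pa.eval 1 = ν1 * (((1:ℂ)-0)*(1-lm)*(1-tm)) := by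
    rw [← add_div, div_eq_iff (E1_ne hl1 ht1)] at c11; linear_combination c11
  have hbl : Pb.eval lm = 0 :=
    (div_eq_zero_iff.mp cl0).resolve_right (El_ne hl0 hl1 hlt)
  have hal : Pa.eval lm = -(νl * ((lm-0)*(lm-1)*(lm-tm))) := by
    rw [div_eq_iff (El_ne hl0 hl1 hlt)] at cl1; linear_combination -cl1
  have hbt : Pb.eval tm = 0 :=
    (div_eq_zero_iff.mp cs0).resolve_right (Et_ne ht0 ht1 hlt)
  have hat : Pa.eval tm = -(νt * ((tm-0)*(tm-1)*(tm-lm))) := by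
    rw [div_eq_iff (Et_ne ht0 ht1 hlt)] at cs1; linear_combination -cs1
  have hai : Pa.coeff 3 = νi := by linear_combination -ci0
  have hci : Pc.coeff 3 = 0 := by linear_combination -ci1
  -- identify Pa
  have hPaPF : Pa = PF lm tm (-ν0) (-ν1 - ρv ν0 ν1 νl νt νi) (-νl) (-νt) := by
    refine sub_eq_zero.mp (vanish3 0 lm tm (Ne.symm hl0) (Ne.symm ht0) hlt _
      (le_trans (degree_sub_le _ _) (max_le hPadeg (PF_degree_le _ _ _ _ _ _)))
      (by rw [Polynomial.coeff_sub, PF_coeff3, hai]; simp only [ρv]; ring)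
      (by rw [Polynomial.eval_sub, PF_eval0, ha0]; ring)
      (by rw [Polynomial.eval_sub, PF_evall, hal]; ring)
      (by rw [Polynomial.eval_sub, PF_evalt, hat]; ring))
  have ha1v : Pa.eval 1 = (-ν1 - ρv ν0 ν1 νl νt νi) * (((1:ℂ)-0)*(1-lm)*(1-tm)) := by
    rw [hPaPF, PF_eval1]
  -- identify Pb
  have hPbPF : Pb = PF lm tm 0 (2 * ν1 + ρv ν0 ν1 νl νt νi) 0 0 := by
    refine sub_eq_zero.mp (vanish4 hl0 hl1 ht0 ht1 hlt _
      (le_trans (degree_sub_le _ _) (max_le hPbdeg (PF_degree_le _ _ _ _ _ _)))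
      (by rw [Polynomial.eval_sub, PF_eval0, hb0]; ring)
      (by rw [Polynomial.eval_sub, PF_eval1]; linear_combination hab1 - ha1v)
      (by rw [Polynomial.eval_sub, PF_evall, hbl]; ring)
      (by rw [Polynomial.eval_sub, PF_evalt, hbt]; ring))
  -- the unique parameters
  obtain ⟨A1, hA1⟩ : ∃ x : ℂ, x = -(Pc.eval lm / ((lm-0)*(lm-1)*(lm-tm))) := ⟨_, rfl⟩
  obtain ⟨A2, hA2⟩ : ∃ x : ℂ, x = -(Pc.eval tm / ((tm-0)*(tm-1)*(tm-lm))) := ⟨_, rfl⟩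
  have hA1El : A1 * ((lm-0)*(lm-1)*(lm-tm)) = -Pc.eval lm := by
    rw [hA1, neg_mul, div_mul_cancel₀ _ (El_ne hl0 hl1 hlt)]
  have hA2Et : A2 * ((tm-0)*(tm-1)*(tm-lm)) = -Pc.eval tm := by
    rw [hA2, neg_mul, div_mul_cancel₀ _ (Et_ne ht0 ht1 hlt)]
  -- identify Pc
  have hPcPF : Pc = PF lm tm (ρv ν0 ν1 νl νt νi + A1 + A2) (-(ρv ν0 ν1 νl νt νi)) (-A1) (-A2) := by
    refine sub_eq_zero.mp (vanish3 1 lm tm (Ne.symm hl1) (Ne.symm ht1) hlt _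
      (le_trans (degree_sub_le _ _) (max_le hPcdeg (PF_degree_le _ _ _ _ _ _)))
      (by rw [Polynomial.coeff_sub, PF_coeff3, hci]; ring)
      (by rw [Polynomial.eval_sub, PF_eval1]; linear_combination hca1 + ha1v)
      (by rw [Polynomial.eval_sub, PF_evall]; linear_combination hA1El)
      (by rw [Polynomial.eval_sub, PF_evalt]; linear_combination hA2Et))
  -- entrywise equality
  have e00 := Psi00 lm tm ν0 ν1 νl νt νi A1 A2
  have e01 := Psi01 lm tm ν0 ν1 νl νt νi A1 A2
  have e10 := Psi10 lm tm ν0 ν1 νl νt νi A1 A2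
  have e11 := Psi11 lm tm ν0 ν1 νl νt νi A1 A2
  have q0 := q_ne lm tm
  have m00 : Ω 0 0 = (Ω0 lm tm ν0 ν1 νl νt νi + A1 • Θ1 lm + A2 • Θ2 tm) 0 0 :=
    mul_left_cancel₀ q0 (by rw [hPa, hPaPF, e00, F_spec])
  have m01 : Ω 0 1 = (Ω0 lm tm ν0 ν1 νl νt νi + A1 • Θ1 lm + A2 • Θ2 tm) 0 1 :=
    mul_left_cancel₀ q0 (by rw [hPb, hPbPF, e01, F_spec])
  have m10 : Ω 1 0 = (Ω0 lm tm ν0 ν1 νl νt νi + A1 • Θ1 lm + A2 • Θ2 tm) 1 0 :=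
    mul_left_cancel₀ q0 (by rw [hPc, hPcPF, e10, F_spec])
  have m11 : Ω 1 1 = (Ω0 lm tm ν0 ν1 νl νt νi + A1 • Θ1 lm + A2 • Θ2 tm) 1 1 :=
    mul_left_cancel₀ q0 (by
      rw [hPa', e11, F_spec, hPaPF]
      exact congrArg toK (by unfold PF; simp only [map_neg, map_sub, map_add]; ring))
  have hMext : Ω = Ω0 lm tm ν0 ν1 νl νt νi + A1 • Θ1 lm + A2 • Θ2 tm := by
    ext i j
    fin_cases i <;> fin_cases j
    · exact m00
    · exact m01
    · exact m10
    · exact m11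
  refine ⟨⟨(A1, A2), hMext, ?_⟩,
    fun a1 a2 => resCond_Psi lm tm hl0 hl1 ht0 ht1 hlt ν0 ν1 νl νt νi a1 a2⟩
  rintro ⟨b1, b2⟩ hb
  have hb10 : Ω 1 0 = Fr lm tm (ρv ν0 ν1 νl νt νi + b1 + b2) (-(ρv ν0 ν1 νl νt νi)) (-b1) (-b2) := by
    rw [hb]; exact Psi10 lm tm ν0 ν1 νl νt νi b1 b2
  have hPcb : Pc = PF lm tm (ρv ν0 ν1 νl νt νi + b1 + b2) (-(ρv ν0 ν1 νl νt νi)) (-b1) (-b2) :=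
    toK_inj (by rw [← hPc, hb10, F_spec])
  have hbl1 : Pc.eval lm = (-b1) * ((lm-0)*(lm-1)*(lm-tm)) := by
    rw [hPcb, PF_evall]
  have hbt1 : Pc.eval tm = (-b2) * ((tm-0)*(tm-1)*(tm-lm)) := by
    rw [hPcb, PF_evalt]
  have hb1 : b1 = A1 := by
    rw [hA1, hbl1, neg_mul, neg_div, mul_div_cancel_right₀ _ (El_ne hl0 hl1 hlt), neg_neg]
  have hb2 : b2 = A2 := by
    rw [hA2, hbt1, neg_mul, neg_div, mul_div_cancel_right₀ _ (Et_ne ht0 ht1 hlt), neg_neg]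
  simp [hb1, hb2]
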